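/- Let h : I → ℝ^κ be square-integrable with Gram matrix 𝔜 ≻ 0, and partition h = [h₁; f] where f : I → ℝ^d is the last d components, so that f(τ) = Ĩ h(τ) with Ĩ = [O_{d,κ−d}, I_d]. Then, with 𝔉 = ∫_I f fᵀ dτ, one has the matrix identity √(𝔉^{-1}) ∫_I f(τ) h(τ)ᵀ dτ √(𝔜^{-1}) = √(𝔉^{-1}) Ĩ √(𝔜), and consequently ∫_I (√(𝔉^{-1}) f(τ) ⊗ I_n) x(τ) dτ = (√(𝔉^{-1}) Ĩ √(𝔜) ⊗ I_n) ∫_I (√(𝔜^{-1}) h(τ) ⊗ I_n) x(τ) dτ for any square-integrable x : I → ℝ^n. -/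

import Mathlib

open Matrix MeasureTheory
open scoped Kronecker

/-- The square root of a positive semidefinite matrix, as defined in the older Mathlib
(`Matrix.PosSemidef.sqrt`, since removed). -/
noncomputable def Matrix.PosSemidef.sqrt {n : Type*} [Fintype n] [DecidableEq n]
    {𝕜 : Type*} [RCLike 𝕜] [PartialOrder 𝕜] [StarOrderedRing 𝕜] {A : Matrix n n 𝕜} (hA : A.PosSemidef) : Matrix n n 𝕜 :=
  (hA.1.eigenvectorUnitary : Matrix n n 𝕜) * diagonal ((↑) ∘ Real.sqrt ∘ hA.1.eigenvalues) *
    (star hA.1.eigenvectorUnitary : Matrix n n 𝕜)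

/-!
Since `f = Ĩ h`, the cross-Gram matrix `∫ f hᵀ` is `Ĩ 𝔜`. Under the continuous functional calculus
`√𝔜` and `√(𝔜⁻¹)` are `√·` and `√(·⁻¹)` applied to `𝔜`, so `√𝔜 √𝔜 = 𝔜` and `√𝔜 √(𝔜⁻¹) = 1`;
hence `𝔜 √(𝔜⁻¹) = √𝔜`. For the second identity, integration commutes with constant matrices:
`∫ (A g ⊗ I_n) x = (A ⊗ I_n) ∫ (g ⊗ I_n) x`. Applied with `A = √(𝔉⁻¹)`, `Ĩ` and `√(𝔜⁻¹)`, it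
reduces the claim to `√(𝔉⁻¹) Ĩ √𝔜 √(𝔜⁻¹) = √(𝔉⁻¹) Ĩ` and the mixed-product rule for `⊗ₖ`.
-/

namespace Matrix

section PosDef

open scoped ComplexOrder

variable {m : Type*} [Fintype m] [DecidableEq m] {𝕜 : Type*} [RCLike 𝕜] {A : Matrix m m 𝕜}

lemma PosSemidef.sqrt_eq_cfc (hA : A.PosSemidef) : hA.sqrt = cfc Real.sqrt A := by
  rw [hA.1.cfc_eq, IsHermitian.cfc, Unitary.conjStarAlgAut_apply]
  rfl

lemma PosDef.pos_of_mem_spectrum (hA : A.PosDef) {x : ℝ} (hx : x ∈ spectrum ℝ A) : 0 < x := by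
  rw [hA.1.spectrum_real_eq_range_eigenvalues] at hx
  obtain ⟨i, rfl⟩ := hx
  exact hA.eigenvalues_pos i

lemma PosDef.sqrt_mul_sqrt (hA : A.PosDef) : hA.posSemidef.sqrt * hA.posSemidef.sqrt = A := by
  rw [PosSemidef.sqrt_eq_cfc, ← cfc_mul Real.sqrt Real.sqrt A]
  conv_rhs => rw [← cfc_id ℝ A hA.1.isSelfAdjoint]
  exact cfc_congr fun x hx => Real.mul_self_sqrt (hA.pos_of_mem_spectrum hx).le

lemma PosDef.inv_eq_cfc (hA : A.PosDef) : A⁻¹ = cfc (fun x : ℝ => x⁻¹) A := by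
  rw [cfc_ringInverse_id (R := ℝ) (ha_unit := hA.isUnit) (ha := hA.1.isSelfAdjoint),
    nonsing_inv_eq_ringInverse]

lemma PosDef.sqrt_mul_sqrt_inv (hA : A.PosDef) :
    hA.posSemidef.sqrt * hA.inv.posSemidef.sqrt = 1 := by
  have hinv : ContinuousOn (fun x : ℝ => x⁻¹) (spectrum ℝ A) :=
    continuousOn_inv₀.mono fun x hx => (hA.pos_of_mem_spectrum hx).ne'
  rw [PosSemidef.sqrt_eq_cfc, PosSemidef.sqrt_eq_cfc, hA.inv_eq_cfc,
    ← cfc_comp' Real.sqrt (fun x : ℝ => x⁻¹) A (ha := hA.1.isSelfAdjoint),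
    ← cfc_mul Real.sqrt _ A, ← cfc_one ℝ A hA.1.isSelfAdjoint]
  exact cfc_congr fun x hx => by
    simp [(Real.sqrt_pos.mpr (hA.pos_of_mem_spectrum hx)).ne']

end PosDef

section Selection

variable {l m n α : Type*} [Fintype m] [DecidableEq m] [NonAssocSemiring α] {E : Matrix l m α}
  {e : l → m}

lemma mul_eq_submatrix_of_apply_eq_ite (hE : ∀ i j, E i j = if j = e i then 1 else 0)
    (M : Matrix m n α) : E * M = M.submatrix e id := by
  ext i k
  simp [mul_apply, hE]

lemma mulVec_eq_comp_of_apply_eq_ite (hE : ∀ i j, E i j = if j = e i then 1 else 0)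
    (v : m → α) : E *ᵥ v = v ∘ e := by
  ext i
  simp [mulVec, dotProduct, hE]

end Selection

end Matrix

lemma integral_mulVec_mul_eq_kronecker_one_mulVec {X : Type*} [MeasurableSpace X] {μ : Measure X}
    {𝕜 : Type*} [RCLike 𝕜] {l m n : Type*} [Fintype l] [Fintype n] [DecidableEq n]
    (A : Matrix m l 𝕜) (g : X → l → 𝕜) (x : X → n → 𝕜)
    (hgx : ∀ j k, Integrable (fun τ => g τ j * x τ k) μ) :
    (fun p : m × n => ∫ τ, (∑ j, A p.1 j * g τ j) * x τ p.2 ∂μ)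
      = (A ⊗ₖ (1 : Matrix n n 𝕜)) *ᵥ fun p => ∫ τ, g τ p.1 * x τ p.2 ∂μ := by
  ext ⟨i, k⟩
  have hintegral : ∫ τ, (∑ j, A i j * g τ j) * x τ k ∂μ = ∑ j, A i j * ∫ τ, g τ j * x τ k ∂μ := by
    simp_rw [Finset.sum_mul, mul_assoc]
    rw [integral_finsetSum _ fun j _ => (hgx j k).const_mul _]
    simp_rw [integral_const_mul]
  simp [hintegral, mulVec, dotProduct, Fintype.sum_prod_type, one_apply]

theorem stmt16_general (c d n : ℕ) (I : Set ℝ)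
    (h : ℝ → Fin (c + d) → ℝ)
    (hh : ∀ j, MemLp (fun τ => h τ j) 2 (volume.restrict I))
    (Y : Matrix (Fin (c + d)) (Fin (c + d)) ℝ)
    (hYdef : Y = Matrix.of fun i j => ∫ τ in I, h τ i * h τ j)
    (hY : Y.PosDef)
    (f : ℝ → Fin d → ℝ) (hfdef : ∀ τ i, f τ i = h τ (Fin.natAdd c i))
    (Itil : Matrix (Fin d) (Fin (c + d)) ℝ)
    (hItil : ∀ i j, Itil i j = if j = Fin.natAdd c i then 1 else 0)
    (F : Matrix (Fin d) (Fin d) ℝ)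
    (hF : F.PosDef) :
    hF.inv.posSemidef.sqrt * (Matrix.of fun i j => ∫ τ in I, f τ i * h τ j)
        * hY.inv.posSemidef.sqrt
      = hF.inv.posSemidef.sqrt * Itil * hY.posSemidef.sqrt ∧
    ∀ x : ℝ → Fin n → ℝ, (∀ k, MemLp (fun τ => x τ k) 2 (volume.restrict I)) →
      (fun p : Fin d × Fin n =>
          ∫ τ in I, (∑ j, hF.inv.posSemidef.sqrt p.1 j * f τ j) * x τ p.2)
        = ((hF.inv.posSemidef.sqrt * Itil * hY.posSemidef.sqrt)
            ⊗ₖ (1 : Matrix (Fin n) (Fin n) ℝ)).mulVec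
            (fun p : Fin (c + d) × Fin n =>
              ∫ τ in I, (∑ j, hY.inv.posSemidef.sqrt p.1 j * h τ j) * x τ p.2) := by
  set B := hF.inv.posSemidef.sqrt
  set S := hY.posSemidef.sqrt
  set C := hY.inv.posSemidef.sqrt
  have hSS : S * S = Y := hY.sqrt_mul_sqrt
  have hSC : S * C = 1 := hY.sqrt_mul_sqrt_inv
  have hf : ∀ τ, Itil *ᵥ h τ = f τ := fun τ => by
    rw [mulVec_eq_comp_of_apply_eq_ite hItil]
    exact funext fun i => (hfdef τ i).symm
  refine ⟨?_, fun x hx => ?_⟩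
  · have hfh : (Matrix.of fun i j => ∫ τ in I, f τ i * h τ j) = Itil * Y := by
      ext i j; simp [mul_eq_submatrix_of_apply_eq_ite hItil, hYdef, hfdef]
    rw [hfh, ← hSS]
    simp only [Matrix.mul_assoc, hSC, Matrix.mul_one]
  · have hhx : ∀ j k, Integrable (fun τ => h τ j * x τ k) (volume.restrict I) :=
      fun j k => (hh j).integrable_mul (hx k)
    have hfx : ∀ j k, Integrable (fun τ => f τ j * x τ k) (volume.restrict I) :=
      fun j k => by simpa only [hfdef] using hhx (Fin.natAdd c j) k
    calc _ = (B ⊗ₖ 1) *ᵥ fun p => ∫ τ in I, f τ p.1 * x τ p.2 :=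
          integral_mulVec_mul_eq_kronecker_one_mulVec B f x hfx
      _ = (B ⊗ₖ 1) *ᵥ ((Itil ⊗ₖ (1 : Matrix (Fin n) (Fin n) ℝ)) *ᵥ
            fun p => ∫ τ in I, h τ p.1 * x τ p.2) := by
          rw [← integral_mulVec_mul_eq_kronecker_one_mulVec Itil h x hhx]
          simp only [← hf, mulVec, dotProduct]
      _ = ((B * Itil * S * C) ⊗ₖ 1) *ᵥ fun p => ∫ τ in I, h τ p.1 * x τ p.2 := by
          rw [Matrix.mul_assoc _ S, hSC, Matrix.mul_one, mulVec_mulVec, ← mul_kronecker_mul,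
            Matrix.mul_one]
      _ = _ := by
          rw [integral_mulVec_mul_eq_kronecker_one_mulVec C h x hhx, mulVec_mulVec,
            ← mul_kronecker_mul, Matrix.mul_one]

/-- With `f` the last `d` components of `h` (so `f = Ĩ h`, `Ĩ = [O, I_d]`):
`√(𝔉⁻¹) (∫ f hᵀ) √(𝔜⁻¹) = √(𝔉⁻¹) Ĩ √𝔜`, and consequently
`∫ (√(𝔉⁻¹) f ⊗ I_n) x = (√(𝔉⁻¹) Ĩ √𝔜 ⊗ I_n) ∫ (√(𝔜⁻¹) h ⊗ I_n) x`. -/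
theorem stmt16 (c d n : ℕ) (I : Set ℝ) (hI : MeasurableSet I)
    (h : ℝ → Fin (c + d) → ℝ)
    (hh : ∀ j, MemLp (fun τ => h τ j) 2 (volume.restrict I))
    (Y : Matrix (Fin (c + d)) (Fin (c + d)) ℝ)
    (hYdef : Y = Matrix.of fun i j => ∫ τ in I, h τ i * h τ j)
    (hY : Y.PosDef)
    (f : ℝ → Fin d → ℝ) (hfdef : ∀ τ i, f τ i = h τ (Fin.natAdd c i))
    (Itil : Matrix (Fin d) (Fin (c + d)) ℝ)
    (hItil : ∀ i j, Itil i j = if j = Fin.natAdd c i then 1 else 0)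
    (F : Matrix (Fin d) (Fin d) ℝ)
    (hFdef : F = Matrix.of fun i j => ∫ τ in I, f τ i * f τ j)
    (hF : F.PosDef) :
    hF.inv.posSemidef.sqrt * (Matrix.of fun i j => ∫ τ in I, f τ i * h τ j)
        * hY.inv.posSemidef.sqrt
      = hF.inv.posSemidef.sqrt * Itil * hY.posSemidef.sqrt ∧
    ∀ x : ℝ → Fin n → ℝ, (∀ k, MemLp (fun τ => x τ k) 2 (volume.restrict I)) →
      (fun p : Fin d × Fin n =>
          ∫ τ in I, (∑ j, hF.inv.posSemidef.sqrt p.1 j * f τ j) * x τ p.2)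
        = ((hF.inv.posSemidef.sqrt * Itil * hY.posSemidef.sqrt)
            ⊗ₖ (1 : Matrix (Fin n) (Fin n) ℝ)).mulVec
            (fun p : Fin (c + d) × Fin n =>
              ∫ τ in I, (∑ j, hY.inv.posSemidef.sqrt p.1 j * h τ j) * x τ p.2) :=
  stmt16_general c d n I h hh Y hYdef hY f hfdef Itil hItil F hF
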